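/- Let γ = (γ_1, …, γ_n) ∈ ℂⁿ and let H_ss = Σ_{j=1}^n γ_j x_j y_j in ℂ[x_1, …, x_n, y_1, …, y_n]. Let H_nil be a homogeneous polynomial of degree 2 such that {H_ss, H_nil} = 0 and such that the derivation P ↦ {H_nil, P} is locally nilpotent (for every polynomial P there is an r ≥ 1 such that the r-fold iterated bracket {H_nil, {H_nil, …, {H_nil, P}…}} vanishes), and set H_2 = H_ss + H_nil. Then for every k ≥ 3 and every homogeneous polynomial P of degree k there exist homogeneous polynomials L and P' of degree k such that P = −{H_2, L} + P' and {H_ss, P'} = 0. -/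

import Mathlib

open MvPolynomial

/-- The standard Poisson bracket `{H, F} = Σ_j (∂H/∂x_j ∂F/∂y_j − ∂H/∂y_j ∂F/∂x_j)`
on `ℂ[x_1, …, x_n, y_1, …, y_n]`, where `x_j = X (Sum.inl j)` and `y_j = X (Sum.inr j)`. -/
noncomputable def poissonBracket {n : ℕ} (H F : MvPolynomial (Fin n ⊕ Fin n) ℂ) :
    MvPolynomial (Fin n ⊕ Fin n) ℂ :=
  ∑ j : Fin n,
    (pderiv (Sum.inl j) H * pderiv (Sum.inr j) F
      - pderiv (Sum.inr j) H * pderiv (Sum.inl j) F)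

/-!
Let `w` give `x_j` the weight `-γ_j` and `y_j` the weight `γ_j`. Then `{H_ss, ·}` acts on each
monomial by multiplication with its `w`-weight, so `{H_ss, F} = μ F` exactly when `F` is
`w`-homogeneous of weight `μ`. In particular `H_nil` has weight `0`, so `{H_nil, ·}` preserves
both the weight and the degree. On the weight-`μ` part of degree `k` with `μ ≠ 0`, the map
`{H_2, ·} = μ + {H_nil, ·}` is then surjective, being a nonzero scalar plus a locally nilpotent
operator. Splitting `P` into its weight components, `P'` is the weight-`0` component and `L`
collects preimages of the others.
-/

open Finset

/-- The preimage is the truncated Neumann series `μ⁻¹ ∑_{i<r} (-μ⁻¹ N)^i x`. -/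
theorem exists_mem_smul_add_apply_eq_of_iterate_eq_zero {K V : Type*} [Field K] [AddCommGroup V]
    [Module K V] (N : V →ₗ[K] V) {W : Submodule K V} (hW : Set.MapsTo N W W) {μ : K}
    (hμ : μ ≠ 0) {x : V} (hx : x ∈ W) {r : ℕ} (hr : N^[r] x = 0) :
    ∃ y ∈ W, μ • y + N y = x := by
  set g : ℕ → V := fun i => (-μ⁻¹) ^ i • N^[i] x
  have telescope : ∀ i, μ • μ⁻¹ • g i + N (μ⁻¹ • g i) = g i - g (i + 1) := fun i => by
    simp only [g, map_smul, smul_smul, ← mul_assoc, mul_inv_cancel₀ hμ, one_mul, pow_succ',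
      Function.iterate_succ_apply', neg_mul, neg_smul, sub_neg_eq_add]
  refine ⟨∑ i ∈ range r, μ⁻¹ • g i,
    W.sum_mem fun i _ => W.smul_mem _ (W.smul_mem _ (hW.iterate i hx)), ?_⟩
  calc μ • ∑ i ∈ range r, μ⁻¹ • g i + N (∑ i ∈ range r, μ⁻¹ • g i)
      = ∑ i ∈ range r, (g i - g (i + 1)) := by
        rw [smul_sum, map_sum, ← sum_add_distrib]; exact sum_congr rfl fun i _ => telescope i
    _ = x := by rw [sum_range_sub']; simp [g, hr]

namespace MvPolynomial

variable {σ R M : Type*} [CommSemiring R]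

theorem IsWeightedHomogeneous.weightedHomogeneousComponent [AddCommMonoid M] {M' : Type*}
    [AddCommMonoid M'] {w' : σ → M'} {φ : MvPolynomial σ R} {m : M'}
    (h : IsWeightedHomogeneous w' φ m) (w : σ → M) (μ : M) :
    IsWeightedHomogeneous w' (weightedHomogeneousComponent w μ φ) m := by
  classical
  intro d hd
  rw [coeff_weightedHomogeneousComponent] at hd
  exact h (ite_ne_right_iff.mp hd).2

theorem exists_sum_weightedHomogeneousComponent_eq [AddCommMonoid M] (w : σ → M)
    (φ : MvPolynomial σ R) (m₀ : M) :
    ∃ s : Finset M, m₀ ∈ s ∧ ∑ m ∈ s, weightedHomogeneousComponent w m φ = φ := by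
  classical
  obtain ⟨s, hs⟩ :=
    Set.Finite.exists_finset_coe (weightedHomogeneousComponent_finsupp (w := w) φ)
  refine ⟨insert m₀ s, mem_insert_self _ _, ?_⟩
  rw [← finsum_eq_sum_of_support_subset _ (by rw [coe_insert, hs]; exact Set.subset_insert _ _),
    sum_weightedHomogeneousComponent]

theorem coeff_X_mul_pderiv (i : σ) (φ : MvPolynomial σ R) (d : σ →₀ ℕ) :
    coeff d (X i * pderiv i φ) = d i * coeff d φ := by
  classical
  induction φ using MvPolynomial.induction_on' with
  | monomial m r =>
    rw [X_mul_pderiv_monomial, coeff_smul, coeff_monomial]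
    split_ifs with h <;> simp [h, nsmul_eq_mul]
  | add p q hp hq => simp only [map_add, mul_add, coeff_add, hp, hq]

theorem IsHomogeneous.pderiv_eq_zero {φ : MvPolynomial σ R} (hφ : φ.IsHomogeneous 0) (i : σ) :
    pderiv i φ = 0 := by
  rw [← totalDegree_zero_iff_isHomogeneous, totalDegree_eq_zero_iff_eq_C] at hφ
  rw [hφ, pderiv_C]

theorem IsHomogeneous.pderiv_mul_pderiv {φ ψ : MvPolynomial σ R} {a b : ℕ}
    (hφ : φ.IsHomogeneous a) (hψ : ψ.IsHomogeneous b) (i j : σ) :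
    (pderiv i φ * pderiv j ψ).IsHomogeneous (a + b - 2) := by
  rcases Nat.eq_zero_or_pos a with rfl | ha
  · rw [hφ.pderiv_eq_zero, zero_mul]
    exact isHomogeneous_zero _ _ _
  rcases Nat.eq_zero_or_pos b with rfl | hb
  · rw [hψ.pderiv_eq_zero, mul_zero]
    exact isHomogeneous_zero _ _ _
  convert hφ.pderiv.mul hψ.pderiv using 1
  omega

end MvPolynomial

section PoissonBracket

variable {n : ℕ}

noncomputable def poissonBracketₗ (H : MvPolynomial (Fin n ⊕ Fin n) ℂ) :
    MvPolynomial (Fin n ⊕ Fin n) ℂ →ₗ[ℂ] MvPolynomial (Fin n ⊕ Fin n) ℂ where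
  toFun := poissonBracket H
  map_add' F G := by
    simp only [poissonBracket, map_add, mul_add, ← sum_add_distrib]
    exact sum_congr rfl fun j _ => by abel
  map_smul' c F := by
    simp only [poissonBracket, Derivation.map_smul, mul_smul_comm, ← smul_sub, smul_sum,
      RingHom.id_apply]

theorem poissonBracketₗ_apply (H F : MvPolynomial (Fin n ⊕ Fin n) ℂ) :
    poissonBracketₗ H F = poissonBracket H F := rfl

theorem poissonBracket_add_left (H₁ H₂ F : MvPolynomial (Fin n ⊕ Fin n) ℂ) :
    poissonBracket (H₁ + H₂) F = poissonBracket H₁ F + poissonBracket H₂ F := by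
  simp only [poissonBracket, map_add, add_mul, ← sum_add_distrib]
  exact sum_congr rfl fun j _ => by abel

theorem MvPolynomial.IsHomogeneous.poissonBracket {H F : MvPolynomial (Fin n ⊕ Fin n) ℂ}
    {a b : ℕ} (hH : H.IsHomogeneous a) (hF : F.IsHomogeneous b) :
    (poissonBracket H F).IsHomogeneous (a + b - 2) :=
  IsHomogeneous.sum _ _ _ fun _ _ =>
    (hH.pderiv_mul_pderiv hF _ _).sub (hH.pderiv_mul_pderiv hF _ _)

theorem MvPolynomial.IsWeightedHomogeneous.poissonBracket {M : Type*} [AddCommGroup M]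
    {w : Fin n ⊕ Fin n → M} {c a b : M} (hw : ∀ j, w (.inl j) + w (.inr j) = c)
    {H F : MvPolynomial (Fin n ⊕ Fin n) ℂ} (hH : IsWeightedHomogeneous w H a)
    (hF : IsWeightedHomogeneous w F b) :
    IsWeightedHomogeneous w (poissonBracket H F) (a + b - c) := by
  refine IsWeightedHomogeneous.sum _ _ _ fun j _ => .sub ?_ ?_
  · have h := (hH.pderiv (i := .inl j) (sub_add_cancel a _)).mul
      (hF.pderiv (i := .inr j) (sub_add_cancel b _))
    rwa [show a - w (.inl j) + (b - w (.inr j)) = a + b - c by rw [← hw j]; abel] at h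
  · have h := (hH.pderiv (i := .inr j) (sub_add_cancel a _)).mul
      (hF.pderiv (i := .inl j) (sub_add_cancel b _))
    rwa [show a - w (.inr j) + (b - w (.inl j)) = a + b - c by rw [← hw j]; abel] at h

noncomputable def semisimpleHamiltonian (γ : Fin n → ℂ) : MvPolynomial (Fin n ⊕ Fin n) ℂ :=
  ∑ j : Fin n, C (γ j) * X (Sum.inl j) * X (Sum.inr j)

def semisimpleWeight (γ : Fin n → ℂ) : Fin n ⊕ Fin n → ℂ :=
  Sum.elim (-γ) γ

theorem pderiv_inl_semisimpleHamiltonian (γ : Fin n → ℂ) (i : Fin n) :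
    pderiv (Sum.inl i) (semisimpleHamiltonian γ) = C (γ i) * X (Sum.inr i) := by
  simp [semisimpleHamiltonian, pderiv_X, Pi.single_apply, mul_comm]

theorem pderiv_inr_semisimpleHamiltonian (γ : Fin n → ℂ) (i : Fin n) :
    pderiv (Sum.inr i) (semisimpleHamiltonian γ) = C (γ i) * X (Sum.inl i) := by
  simp [semisimpleHamiltonian, pderiv_X, Pi.single_apply, mul_comm]

theorem weight_semisimpleWeight (γ : Fin n → ℂ) (d : Fin n ⊕ Fin n →₀ ℕ) :
    Finsupp.weight (semisimpleWeight γ) d = ∑ j, γ j * (d (.inr j) - d (.inl j)) := by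
  rw [Finsupp.weight_apply, Finsupp.sum_fintype _ _ (by simp), Fintype.sum_sum_type,
    ← sum_add_distrib]
  exact sum_congr rfl fun j _ => by simp [semisimpleWeight]; ring

theorem coeff_poissonBracket_semisimpleHamiltonian (γ : Fin n → ℂ)
    (F : MvPolynomial (Fin n ⊕ Fin n) ℂ) (d : Fin n ⊕ Fin n →₀ ℕ) :
    coeff d (poissonBracket (semisimpleHamiltonian γ) F) =
      Finsupp.weight (semisimpleWeight γ) d * coeff d F := by
  simp only [poissonBracket, pderiv_inl_semisimpleHamiltonian, pderiv_inr_semisimpleHamiltonian,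
    coeff_sum, coeff_sub, mul_assoc, coeff_C_mul, coeff_X_mul_pderiv, weight_semisimpleWeight,
    sum_mul]
  exact sum_congr rfl fun j _ => by ring

theorem poissonBracket_semisimpleHamiltonian_eq_smul_iff (γ : Fin n → ℂ)
    (F : MvPolynomial (Fin n ⊕ Fin n) ℂ) (μ : ℂ) :
    poissonBracket (semisimpleHamiltonian γ) F = μ • F ↔
      IsWeightedHomogeneous (semisimpleWeight γ) F μ := by
  simp only [MvPolynomial.ext_iff, coeff_poissonBracket_semisimpleHamiltonian, coeff_smul,
    smul_eq_mul, mul_eq_mul_right_iff, IsWeightedHomogeneous]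
  exact forall_congr' fun d => by tauto

theorem exists_poissonBracket_eq_of_isWeightedHomogeneous (γ : Fin n → ℂ)
    {Hnil : MvPolynomial (Fin n ⊕ Fin n) ℂ} (hnilHom : Hnil.IsHomogeneous 2)
    (hnilWeight : IsWeightedHomogeneous (semisimpleWeight γ) Hnil 0) {μ : ℂ} (hμ : μ ≠ 0)
    {k : ℕ} {Q : MvPolynomial (Fin n ⊕ Fin n) ℂ}
    (hQμ : IsWeightedHomogeneous (semisimpleWeight γ) Q μ) (hQk : Q.IsHomogeneous k) {r : ℕ}
    (hr : (poissonBracket Hnil)^[r] Q = 0) :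
    ∃ L : MvPolynomial (Fin n ⊕ Fin n) ℂ,
      L.IsHomogeneous k ∧ poissonBracket (semisimpleHamiltonian γ + Hnil) L = Q := by
  set W := weightedHomogeneousSubmodule ℂ (semisimpleWeight γ) μ ⊓
    homogeneousSubmodule (Fin n ⊕ Fin n) ℂ k
  have hW : Set.MapsTo (poissonBracketₗ Hnil) W W := by
    rintro F ⟨hFμ, hFk⟩
    refine ⟨?_, ?_⟩
    · simpa [poissonBracketₗ_apply] using
        hnilWeight.poissonBracket (c := 0) (fun j => by simp [semisimpleWeight]) hFμ
    · simpa [poissonBracketₗ_apply] using hnilHom.poissonBracket hFk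
  obtain ⟨L, ⟨hLμ, hLk⟩, hL⟩ :=
    exists_mem_smul_add_apply_eq_of_iterate_eq_zero _ hW hμ ⟨hQμ, hQk⟩ hr
  refine ⟨L, hLk, ?_⟩
  rw [poissonBracket_add_left, (poissonBracket_semisimpleHamiltonian_eq_smul_iff γ L μ).2 hLμ]
  exact hL

end PoissonBracket

theorem homogeneous_normal_form_decomposition_general
    (n : ℕ) (γ : Fin n → ℂ)
    (Hss : MvPolynomial (Fin n ⊕ Fin n) ℂ)
    (hHss : Hss = ∑ j : Fin n, C (γ j) * X (Sum.inl j) * X (Sum.inr j))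
    (Hnil : MvPolynomial (Fin n ⊕ Fin n) ℂ)
    (hnilHom : Hnil.IsHomogeneous 2)
    (hcomm : poissonBracket Hss Hnil = 0)
    (hnilp : ∀ P : MvPolynomial (Fin n ⊕ Fin n) ℂ,
      ∃ r : ℕ, 1 ≤ r ∧ (fun Q => poissonBracket Hnil Q)^[r] P = 0)
    (H2 : MvPolynomial (Fin n ⊕ Fin n) ℂ)
    (hH2 : H2 = Hss + Hnil)
    (k : ℕ)
    (P : MvPolynomial (Fin n ⊕ Fin n) ℂ)
    (hP : P.IsHomogeneous k) :
    ∃ L P' : MvPolynomial (Fin n ⊕ Fin n) ℂ,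
      L.IsHomogeneous k ∧ P'.IsHomogeneous k ∧
      P = -poissonBracket H2 L + P' ∧ poissonBracket Hss P' = 0 := by
  change Hss = semisimpleHamiltonian γ at hHss
  subst hHss hH2
  set w := semisimpleWeight γ
  obtain ⟨s, hs0, hsum⟩ := exists_sum_weightedHomogeneousComponent_eq w P 0
  set Pc : ℂ → MvPolynomial (Fin n ⊕ Fin n) ℂ :=
    fun μ => weightedHomogeneousComponent w μ P
  have hnilWeight : IsWeightedHomogeneous w Hnil 0 :=
    (poissonBracket_semisimpleHamiltonian_eq_smul_iff γ Hnil 0).1 (by rw [hcomm, zero_smul])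
  have hsolve (μ : ℂ) (hμ : μ ≠ 0) : ∃ L : MvPolynomial (Fin n ⊕ Fin n) ℂ,
      L.IsHomogeneous k ∧ poissonBracket (semisimpleHamiltonian γ + Hnil) L = Pc μ :=
    have ⟨_, _, hr⟩ := hnilp (Pc μ)
    exists_poissonBracket_eq_of_isWeightedHomogeneous γ hnilHom hnilWeight hμ
      (weightedHomogeneousComponent_isWeightedHomogeneous μ P)
      (hP.weightedHomogeneousComponent w μ) hr
  choose! L hLk hL using hsolve
  refine ⟨-∑ μ ∈ s.erase 0, L μ, Pc 0,
    (IsHomogeneous.sum _ _ _ fun μ hμ => hLk μ (ne_of_mem_erase hμ)).neg,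
    hP.weightedHomogeneousComponent w 0, ?_, ?_⟩
  · rw [← poissonBracketₗ_apply, map_neg, neg_neg, map_sum]
    simp only [poissonBracketₗ_apply]
    rw [sum_congr rfl fun μ hμ => hL μ (ne_of_mem_erase hμ), sum_erase_add _ _ hs0, hsum]
  · rw [poissonBracket_semisimpleHamiltonian_eq_smul_iff γ (Pc 0) 0 |>.2
      (weightedHomogeneousComponent_isWeightedHomogeneous 0 P), zero_smul]

/-- With `H_2 = H_ss + H_nil` the semisimple-plus-nilpotent quadratic
part, every homogeneous polynomial `P` of degree `k ≥ 3` decomposes as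
`P = −{H_2, L} + P'` with `L, P'` homogeneous of degree `k` and `{H_ss, P'} = 0`. -/
theorem homogeneous_normal_form_decomposition
    (n : ℕ) (γ : Fin n → ℂ)
    (Hss : MvPolynomial (Fin n ⊕ Fin n) ℂ)
    (hHss : Hss = ∑ j : Fin n, C (γ j) * X (Sum.inl j) * X (Sum.inr j))
    (Hnil : MvPolynomial (Fin n ⊕ Fin n) ℂ)
    (hnilHom : Hnil.IsHomogeneous 2)
    (hcomm : poissonBracket Hss Hnil = 0)
    (hnilp : ∀ P : MvPolynomial (Fin n ⊕ Fin n) ℂ,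
      ∃ r : ℕ, 1 ≤ r ∧ (fun Q => poissonBracket Hnil Q)^[r] P = 0)
    (H2 : MvPolynomial (Fin n ⊕ Fin n) ℂ)
    (hH2 : H2 = Hss + Hnil)
    (k : ℕ) (hk : 3 ≤ k)
    (P : MvPolynomial (Fin n ⊕ Fin n) ℂ)
    (hP : P.IsHomogeneous k) :
    ∃ L P' : MvPolynomial (Fin n ⊕ Fin n) ℂ,
      L.IsHomogeneous k ∧ P'.IsHomogeneous k ∧
      P = -poissonBracket H2 L + P' ∧ poissonBracket Hss P' = 0 :=
  homogeneous_normal_form_decomposition_general n γ Hss hHss Hnil hnilHom hcomm hnilp H2 hH2 k P hP
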